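/- arXiv:2211.16533 — 3 statements merged into one kernel-verified Lean document; each statement's English description precedes it below -/
import Mathlib

section
/- (de Pillis) Let φ : M_n(ℂ) → M_m(ℂ) be linear and let ρ_φ = Σ_{i,j} E_{ij}* ⊗ φ(E_{ij}) where {E_{ij}} is the standard matrix unit basis. Then φ is Hermiticity-preserving (i.e. φ(a*) = φ(a)* for all a) if and only if ρ_φ is a Hermitian matrix in M_n(ℂ) ⊗ M_m(ℂ). -/
/-!
The `((p, a), (q, b))` entry of `ρ_φ` is `φ(E_qp)_ab`, so `ρ_φ` is Hermitian exactly when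
`φ(E_pq)ᴴ = φ(E_qp) = φ(E_pqᴴ)` for all matrix units. Since `a ↦ φ aᴴ` and `a ↦ (φ a)ᴴ` are both
conjugate-linear, agreeing on the matrix units means agreeing everywhere.
-/

open Matrix Kronecker BigOperators

namespace Matrix

variable {R n m : Type*} [CommSemiring R] [StarRing R] [Fintype n] [DecidableEq n]
variable (φ : Matrix n n R →ₗ[R] Matrix m m R)

def jamiolkowski : Matrix (n × m) (n × m) R :=
  ∑ i, ∑ j, (single i j (1 : R))ᴴ ⊗ₖ φ (single i j 1)

theorem jamiolkowski_apply (p q : n) (a b : m) :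
    jamiolkowski φ (p, a) (q, b) = φ (single q p 1) a b := by
  simp [jamiolkowski, sum_apply, conjTranspose_single, single_apply, ite_and]

theorem isHermitian_jamiolkowski_iff :
    (jamiolkowski φ).IsHermitian ↔ ∀ i j, (φ (single i j 1))ᴴ = φ (single j i 1) := by
  simp only [IsHermitian.ext_iff, Prod.forall, jamiolkowski_apply, ← Matrix.ext_iff,
    conjTranspose_apply]
  exact ⟨fun h i j a b => h i a j b, fun h p a q b => h p q a b⟩

theorem map_conjTranspose_iff_single :
    (∀ a, φ aᴴ = (φ a)ᴴ) ↔ ∀ i j, (φ (single i j 1))ᴴ = φ (single j i 1) := by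
  refine ⟨fun h i j => by rw [← h, conjTranspose_single, star_one], fun h => ?_⟩
  suffices φ.toAddMonoidHom.comp (conjTransposeAddEquiv n n R).toAddMonoidHom =
      (conjTransposeAddEquiv m m R).toAddMonoidHom.comp φ.toAddMonoidHom from
    fun a => DFunLike.congr_fun this a
  refine ext_addMonoidHom fun i j => AddMonoidHom.ext fun x => ?_
  change φ (single i j x)ᴴ = (φ (single i j x))ᴴ
  have hx : single i j x = x • single i j (1 : R) := by rw [smul_single, smul_eq_mul, mul_one]
  rw [hx, conjTranspose_smul, conjTranspose_single, star_one, map_smul, map_smul,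
    conjTranspose_smul, h]

end Matrix

/-- de Pillis: φ is Hermiticity-preserving iff its Jamiołkowski matrix
`ρ_φ = Σ_{ij} E_{ij}* ⊗ φ(E_{ij})` is Hermitian. -/
theorem dePillis (n m : ℕ)
    (φ : Matrix (Fin n) (Fin n) ℂ →ₗ[ℂ] Matrix (Fin m) (Fin m) ℂ) :
    (∀ a : Matrix (Fin n) (Fin n) ℂ, φ aᴴ = (φ a)ᴴ) ↔
      (∑ i : Fin n, ∑ j : Fin n,
        (Matrix.single i j (1 : ℂ))ᴴ ⊗ₖ φ (Matrix.single i j (1 : ℂ))).IsHermitian :=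
  (map_conjTranspose_iff_single φ).trans (isHermitian_jamiolkowski_iff φ).symm
end

section
/- (Jamiołkowski, part a) Let φ : M_n(ℂ) → M_m(ℂ) be linear and ρ_φ = Σ_{i,j} E_{ij}* ⊗ φ(E_{ij}). Then φ is a positive map (maps positive semidefinite matrices to positive semidefinite matrices) if and only if ρ_φ is positive on pure tensors, i.e. tr[ρ_φ (a ⊗ b)] ≥ 0 for all positive semidefinite a ∈ M_n(ℂ) and b ∈ M_m(ℂ). -/
open Matrix Kronecker BigOperators ComplexOrder

/-!
Since `tr[ρ_φ (a ⊗ b)] = tr(φ(a) b)`, the statement is the self-duality of the cone of positive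
semidefinite matrices under the trace pairing: `A ≥ 0` iff `tr(A b) ≥ 0` for all `b ≥ 0`.
Testing against `b = x x*` gives `x* A x ≥ 0`, which over `ℂ` already forces `A` to be Hermitian;
conversely, writing `b = c* c`, cyclicity of the trace gives `tr(A b) = tr(c A c*) ≥ 0`.
-/

namespace Matrix

variable {ι κ : Type*} [Fintype ι] [DecidableEq ι] [Fintype κ]

theorem trace_jamiolkowski_mul_kronecker {R : Type*} [CommSemiring R] [StarRing R]
    (φ : Matrix ι ι R →ₗ[R] Matrix κ κ R) (a : Matrix ι ι R) (b : Matrix κ κ R) :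
    ((∑ i, ∑ j, (single i j (1 : R))ᴴ ⊗ₖ φ (single i j 1)) * (a ⊗ₖ b)).trace
      = (φ a * b).trace := by
  conv_rhs => rw [matrix_eq_sum_single a]
  simp only [Finset.sum_mul, trace_sum, map_sum, ← mul_kronecker_mul, trace_kronecker,
    conjTranspose_single, star_one, trace_single_mul, one_smul]
  refine Finset.sum_congr rfl fun i _ => Finset.sum_congr rfl fun j _ => ?_
  rw [show single i j (a i j) = a i j • single i j (1 : R) by
      rw [smul_single, smul_eq_mul, mul_one],
    map_smul, smul_mul_assoc, trace_smul, smul_eq_mul]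

theorem posSemidef_iff_dotProduct_mulVec_nonneg {A : Matrix κ κ ℂ} :
    A.PosSemidef ↔ ∀ x, 0 ≤ star x ⬝ᵥ A *ᵥ x := by
  classical
  refine ⟨PosSemidef.dotProduct_mulVec_nonneg, fun h => ?_⟩
  rw [← isPositive_toEuclideanLin_iff, LinearMap.isPositive_iff_complex]
  intro x
  have hz : 0 ≤ star (star x.ofLp ⬝ᵥ A *ᵥ x.ofLp) := star_nonneg_iff.mpr (h x)
  rw [star_dotProduct, star_star, dotProduct_comm] at hz
  obtain ⟨hre, him⟩ := Complex.nonneg_iff.mp hz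
  exact ⟨Complex.ext rfl him, hre⟩

theorem posSemidef_iff_trace_mul_nonneg {A : Matrix κ κ ℂ} :
    A.PosSemidef ↔ ∀ B : Matrix κ κ ℂ, B.PosSemidef → 0 ≤ (A * B).trace := by
  classical
  refine ⟨fun hA B hB => ?_, fun h => posSemidef_iff_dotProduct_mulVec_nonneg.mpr fun x => ?_⟩
  · open scoped MatrixOrder Matrix.Norms.L2Operator in
    obtain ⟨C, rfl⟩ := CStarAlgebra.nonneg_iff_eq_star_mul_self.mp hB.nonneg
    rw [star_eq_conjTranspose, ← Matrix.mul_assoc, trace_mul_comm, ← Matrix.mul_assoc]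
    exact (hA.mul_mul_conjTranspose_same C).trace_nonneg
  · simpa [mul_vecMulVec, dotProduct_comm] using h _ (posSemidef_vecMulVec_self_star x)

end Matrix

/-- Jamiołkowski (a): φ is a positive map iff its Jamiołkowski matrix is
positive on pure tensors (block positive). -/
theorem jamiolkowski_positive_iff_POPT (n m : ℕ)
    (φ : Matrix (Fin n) (Fin n) ℂ →ₗ[ℂ] Matrix (Fin m) (Fin m) ℂ) :
    (∀ a : Matrix (Fin n) (Fin n) ℂ, a.PosSemidef → (φ a).PosSemidef) ↔
      (∀ (a : Matrix (Fin n) (Fin n) ℂ) (b : Matrix (Fin m) (Fin m) ℂ),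
        a.PosSemidef → b.PosSemidef →
        0 ≤ ((∑ i : Fin n, ∑ j : Fin n,
          (Matrix.single i j (1 : ℂ))ᴴ ⊗ₖ φ (Matrix.single i j (1 : ℂ))) * (a ⊗ₖ b)).trace) := by
  simp only [trace_jamiolkowski_mul_kronecker]
  exact ⟨fun h a b ha hb => posSemidef_iff_trace_mul_nonneg.mp (h a ha) b hb,
    fun h a ha => posSemidef_iff_trace_mul_nonneg.mpr fun b hb => h a b ha hb⟩
end

section
/- (Choi) Let φ : M_n(ℂ) → M_m(ℂ) be linear and define the Choi matrix C(φ) = Σ_{i,j} E_{ij} ⊗ φ(E_{ij}). Then φ is completely positive (i.e. id_k ⊗ φ : M_k(ℂ) ⊗ M_n(ℂ) → M_k(ℂ) ⊗ M_m(ℂ) is positive for all k) if and only if C(φ) is a positive semidefinite matrix. -/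
/-!
Both directions are instances of "a compression of a positive matrix is positive".
The Choi matrix is `(id_n ⊗ φ)(Ω)` for the positive rank-one matrix `Ω = vec 1 (vec 1)ᴴ`, so
complete positivity gives its positivity. Conversely, `(id_k ⊗ φ)(X) = Vᴴ (X ⊗ C(φ)) V` for a fixed
0/1 matrix `V`, and a Kronecker product of positive semidefinite matrices is positive semidefinite.
-/

open Matrix Kronecker BigOperators ComplexOrder

/-- The map `id_k ⊗ φ` acting blockwise on matrices over `Fin k × Fin n`. -/
noncomputable def tensId {n m : ℕ} (k : ℕ)
    (φ : Matrix (Fin n) (Fin n) ℂ →ₗ[ℂ] Matrix (Fin m) (Fin m) ℂ)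
    (X : Matrix (Fin k × Fin n) (Fin k × Fin n) ℂ) :
    Matrix (Fin k × Fin m) (Fin k × Fin m) ℂ :=
  fun p q => φ (fun i j => X (p.1, i) (q.1, j)) p.2 q.2

/-- φ is completely positive if `id_k ⊗ φ` is positive for all k. -/
def CompletelyPositive {n m : ℕ}
    (φ : Matrix (Fin n) (Fin n) ℂ →ₗ[ℂ] Matrix (Fin m) (Fin m) ℂ) : Prop :=
  ∀ (k : ℕ) (X : Matrix (Fin k × Fin n) (Fin k × Fin n) ℂ),
    X.PosSemidef → (tensId k φ X).PosSemidef

section ChoiMatrix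

variable {R ι κ : Type*} [CommSemiring R] [Fintype ι] [DecidableEq ι]

def choiMatrix (φ : Matrix ι ι R →ₗ[R] Matrix κ κ R) : Matrix (ι × κ) (ι × κ) R :=
  ∑ i, ∑ j, single i j 1 ⊗ₖ φ (single i j 1)

theorem choiMatrix_apply (φ : Matrix ι ι R →ₗ[R] Matrix κ κ R) (i j : ι) (b d : κ) :
    choiMatrix φ (i, b) (j, d) = φ (single i j 1) b d := by
  simp only [choiMatrix, Matrix.sum_apply, kronecker_apply, single_apply, ite_mul, one_mul,
    zero_mul, ite_and]
  simp

theorem apply_eq_sum_mul_choiMatrix (φ : Matrix ι ι R →ₗ[R] Matrix κ κ R)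
    (A : Matrix ι ι R) (b d : κ) :
    φ A b d = ∑ i, ∑ j, A i j * choiMatrix φ (i, b) (j, d) := by
  conv_lhs => rw [matrix_eq_sum_single A]
  simp only [map_sum, Matrix.sum_apply, choiMatrix_apply]
  refine Fintype.sum_congr _ _ fun i => Fintype.sum_congr _ _ fun j => ?_
  have hsingle : single i j (A i j) = A i j • single i j (1 : R) := by
    rw [smul_single, smul_eq_mul, mul_one]
  rw [hsingle, map_smul]
  rfl

end ChoiMatrix

section MiddleContraction

variable {R α ι β : Type*} [Semiring R] [StarRing R] [Fintype α] [Fintype ι] [Fintype β]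
  [DecidableEq α] [DecidableEq ι] [DecidableEq β]

-- `1 ⊗ vec 1 ⊗ 1`, up to reassociating the index types.
variable (R α ι β) in
def middleContraction : Matrix ((α × ι) × (ι × β)) (α × β) R :=
  fun r p => if p.1 = r.1.1 ∧ r.2.1 = r.1.2 ∧ p.2 = r.2.2 then 1 else 0

theorem conjTranspose_middleContraction_mul_mul_apply
    (Y : Matrix ((α × ι) × (ι × β)) ((α × ι) × (ι × β)) R) (a c : α) (b d : β) :
    ((middleContraction R α ι β)ᴴ * Y * middleContraction R α ι β) (a, b) (c, d) =
      ∑ i, ∑ j, Y ((a, i), (i, b)) ((c, j), (j, d)) := by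
  rw [Finset.sum_comm]
  simp [middleContraction, Matrix.mul_apply, Fintype.sum_prod_type, ite_and, apply_ite star]

end MiddleContraction

section TensId

variable {n m : ℕ} (φ : Matrix (Fin n) (Fin n) ℂ →ₗ[ℂ] Matrix (Fin m) (Fin m) ℂ)

theorem tensId_eq_conjTranspose_mul_kronecker_choiMatrix_mul (k : ℕ)
    (X : Matrix (Fin k × Fin n) (Fin k × Fin n) ℂ) :
    tensId k φ X = (middleContraction ℂ (Fin k) (Fin n) (Fin m))ᴴ * (X ⊗ₖ choiMatrix φ) *
      middleContraction ℂ (Fin k) (Fin n) (Fin m) := by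
  ext ⟨a, b⟩ ⟨c, d⟩
  dsimp only [tensId]
  rw [conjTranspose_middleContraction_mul_mul_apply]
  exact apply_eq_sum_mul_choiMatrix φ _ b d

theorem choiMatrix_eq_tensId_vecMulVec_vec_one :
    choiMatrix φ = tensId n φ (vecMulVec (vec 1) (star (vec 1))) := by
  ext ⟨a, b⟩ ⟨c, d⟩
  rw [choiMatrix_apply, tensId]
  refine congrArg (fun M => φ M b d) ?_
  ext i j
  simp only [vecMulVec_apply, vec, single_apply, one_apply, Pi.star_apply]
  split_ifs <;> simp_all

end TensId

/-- Choi's theorem: φ is completely positive iff its Choi matrix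
`C(φ) = Σ_{ij} E_{ij} ⊗ φ(E_{ij})` is positive semidefinite. -/
theorem choi_theorem (n m : ℕ)
    (φ : Matrix (Fin n) (Fin n) ℂ →ₗ[ℂ] Matrix (Fin m) (Fin m) ℂ) :
    CompletelyPositive φ ↔
      (∑ i : Fin n, ∑ j : Fin n,
        single i j (1 : ℂ) ⊗ₖ φ (single i j (1 : ℂ))).PosSemidef := by
  change CompletelyPositive φ ↔ (choiMatrix φ).PosSemidef
  constructor
  · intro hφ
    rw [choiMatrix_eq_tensId_vecMulVec_vec_one]
    exact hφ n _ (posSemidef_vecMulVec_self_star _)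
  · intro hC k X hX
    rw [tensId_eq_conjTranspose_mul_kronecker_choiMatrix_mul]
    exact (hX.kronecker hC).conjTranspose_mul_mul_same _
end
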